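/- arXiv:2303.08905 — 6 statements merged into one kernel-verified Lean document; each statement's English description precedes it below -/
import Mathlib

section
/- Let F: ℝ^{m+1} → ℝ^{n+1} be a quadratic form given by F(x) = (XᵀA₁X, ..., XᵀA_{n+1}X) with each Aᵢ symmetric, such that |F(x)| = 1 whenever |x| = 1. Then, writing S = A₁² + A₂² + ... + A_{n+1}², we have 8·tr(S) + |ΔF|² = 4(m+1)(m+3), where ΔF = -2(tr A₁, ..., tr A_{n+1}). -/
open Matrix BigOperators Finset

/-- For a quadratic form `F(x) = (XᵀA₁X, …, XᵀA_{n+1}X)` with symmetric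
matrices, mapping the unit sphere to the unit sphere, one has
`8 tr S + |ΔF|² = 4(m+1)(m+3)` where `S = ΣᵢAᵢ²` and `ΔF = -2(tr A₁,…,tr A_{n+1})`. -/
theorem stmt0 (m n : ℕ) (A : Fin (n + 1) → Matrix (Fin (m + 1)) (Fin (m + 1)) ℝ)
    (hsymm : ∀ i, (A i).IsSymm)
    (hsphere : ∀ x : Fin (m + 1) → ℝ,
      ∑ i, (x ⬝ᵥ (A i).mulVec x) ^ 2 = (∑ k, x k ^ 2) ^ 2) :
    8 * (∑ i, (A i) ^ 2).trace + ∑ i, (-2 * (A i).trace) ^ 2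
      = 4 * ((m : ℝ) + 1) * ((m : ℝ) + 3) := by
  classical
  set N : ℝ := (m : ℝ) + 1 with hN
  -- quadratic form values on e_a + c e_b
  have hq : ∀ (M : Matrix (Fin (m+1)) (Fin (m+1)) ℝ) (a b : Fin (m+1)) (c : ℝ),
      (fun k => (if k = a then (1:ℝ) else 0) + (if k = b then c else 0)) ⬝ᵥ
        M.mulVec (fun k => (if k = a then (1:ℝ) else 0) + (if k = b then c else 0))
      = M a a + c * M a b + c * M b a + c^2 * M b b := by
    intro M a b c
    simp [dotProduct, mulVec, mul_add, add_mul, Finset.sum_add_distrib, ite_mul, mul_ite,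
      Finset.mul_sum, Finset.sum_ite_eq']
    ring
  have hnorm : ∀ (a b : Fin (m+1)) (c : ℝ),
      ∑ k, ((if k = a then (1:ℝ) else 0) + (if k = b then c else 0))^2
      = 1 + c^2 + 2*c*(if a = b then (1:ℝ) else 0) := by
    intro a b c
    have h1 : ∀ x : Fin (m+1), ((if x = a then (1:ℝ) else 0) + (if x = b then c else 0))^2
        = (if x = a then (1:ℝ) else 0) + (if x = b then c^2 else 0)
          + (if a = b then (2*c*(if x = a then (1:ℝ) else 0)) else 0) := by
      intro x
      split_ifs <;> try subst_vars
      all_goals try exact absurd rfl (by assumption)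
      all_goals ring
    rw [Finset.sum_congr rfl (fun x _ => h1 x)]
    rw [Finset.sum_add_distrib, Finset.sum_add_distrib]
    by_cases h : a = b <;>
      simp [h, Finset.sum_ite_eq', Finset.mul_sum]
  have hsph : ∀ (a b : Fin (m+1)) (c : ℝ),
      ∑ i, (A i a a + c * A i a b + c * A i b a + c^2 * A i b b)^2
      = (1 + c^2 + 2*c*(if a = b then (1:ℝ) else 0))^2 := by
    intro a b c
    have := hsphere (fun k => (if k = a then (1:ℝ) else 0) + (if k = b then c else 0))
    rw [hnorm] at this
    rw [← this]
    exact Finset.sum_congr rfl fun i _ => by rw [hq]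
  -- symmetry
  have hs : ∀ i a b, A i b a = A i a b := by
    intro i a b
    have := (hsymm i).apply a b
    simpa using this
  -- key identity from c = 1 and c = -1
  have key : ∀ a b : Fin (m+1),
      ∑ i, (2*(A i a a + A i b b)^2 + 8*(A i a b)^2)
      = 8 + 8 * (if a = b then (1:ℝ) else 0) := by
    intro a b
    have E1 := hsph a b 1
    have E2 := hsph a b (-1)
    have comb : ∑ i, (2*(A i a a + A i b b)^2 + 8*(A i a b)^2)
        = (∑ i, (A i a a + 1 * A i a b + 1 * A i b a + 1^2 * A i b b)^2)
          + (∑ i, (A i a a + (-1) * A i a b + (-1) * A i b a + (-1)^2 * A i b b)^2) := by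
      rw [← Finset.sum_add_distrib]
      exact Finset.sum_congr rfl fun i _ => by rw [hs i a b]; ring
    rw [comb, E1, E2]
    by_cases h : a = b <;> simp [h] <;> ring
  -- diagonal identity (c = 0)
  have diag : ∀ a : Fin (m+1), ∑ i, (A i a a)^2 = 1 := by
    intro a
    have := hsph a a 0
    simpa using this
  -- total sum of key
  have big : ∑ a, ∑ b, ∑ i, (2*(A i a a + A i b b)^2 + 8*(A i a b)^2)
      = 8 * N^2 + 8 * N := by
    rw [Finset.sum_congr rfl (fun a _ => Finset.sum_congr rfl (fun b _ => key a b))]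
    simp [Finset.sum_add_distrib, Finset.sum_ite_eq', Finset.sum_const, Finset.card_univ, hN]
    ring
  -- swap sums
  have big2 : ∑ i, ∑ a, ∑ b, (2*(A i a a + A i b b)^2 + 8*(A i a b)^2)
      = 8 * N^2 + 8 * N := by
    rw [← big, Finset.sum_comm]
    exact Finset.sum_congr rfl fun a _ => Finset.sum_comm
  -- expand the double sum for each i
  have expand : ∀ i, ∑ a, ∑ b, (2*(A i a a + A i b b)^2 + 8*(A i a b)^2)
      = 4*N*(∑ a, (A i a a)^2) + 4*(∑ a, A i a a)^2 + 8*(∑ a, ∑ b, (A i a b)^2) := by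
    intro i
    have inner : ∀ a : Fin (m+1), ∑ b, (2*(A i a a + A i b b)^2 + 8*(A i a b)^2)
        = 2*N*(A i a a)^2 + 4*(A i a a)*(∑ b, A i b b) + 2*(∑ b, (A i b b)^2)
          + 8*(∑ b, (A i a b)^2) := by
      intro a
      rw [Finset.sum_congr rfl (fun b _ => show
        (2*(A i a a + A i b b)^2 + 8*(A i a b)^2)
          = 2*(A i a a)^2 + (4*(A i a a))*(A i b b) + 2*(A i b b)^2 + 8*(A i a b)^2
        from by ring)]
      simp only [Finset.sum_add_distrib, ← Finset.mul_sum, Finset.sum_const,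
        Finset.card_univ, Fintype.card_fin, nsmul_eq_mul]
      push_cast [hN]
      ring
    rw [Finset.sum_congr rfl (fun a _ => inner a)]
    simp only [Finset.sum_add_distrib, ← Finset.mul_sum, Finset.sum_const,
      Finset.card_univ, Fintype.card_fin, nsmul_eq_mul, ← Finset.sum_mul]
    push_cast [hN]
    ring
  -- diag total
  have diagtot : ∑ i, ∑ a, (A i a a)^2 = N := by
    rw [Finset.sum_comm]
    rw [Finset.sum_congr rfl (fun a _ => diag a)]
    simp [Finset.sum_const, Finset.card_univ, hN]
  -- combine
  have main : ∑ i, (4*(∑ a, A i a a)^2 + 8*(∑ a, ∑ b, (A i a b)^2)) = 4*N^2 + 8*N := by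
    have h1 : ∑ i, (4*N*(∑ a, (A i a a)^2) + (4*(∑ a, A i a a)^2 + 8*(∑ a, ∑ b, (A i a b)^2)))
        = 8 * N^2 + 8 * N := by
      rw [← big2]
      exact Finset.sum_congr rfl fun i _ => by rw [expand i]; ring
    rw [Finset.sum_add_distrib, ← Finset.mul_sum, diagtot] at h1
    linarith
  -- rewrite goal in terms of entry sums
  have tr1 : ∀ i, (A i).trace = ∑ a, A i a a := fun i => rfl
  have tr2 : ∀ i, ((A i)^2).trace = ∑ a, ∑ b, (A i a b)^2 := by
    intro i
    rw [pow_two]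
    rw [Matrix.trace]
    simp only [Matrix.diag, Matrix.mul_apply]
    exact Finset.sum_congr rfl fun a _ => Finset.sum_congr rfl fun b _ => by
      rw [hs i a b]; ring
  rw [Matrix.trace_sum]
  rw [Finset.sum_congr rfl (fun i _ => tr2 i)]
  rw [Finset.sum_congr rfl (fun (i : Fin (n+1)) _ => show (-2 * (A i).trace)^2 = 4*(∑ a, A i a a)^2 from by rw [tr1 i]; ring)]
  rw [Finset.sum_add_distrib, ← Finset.mul_sum] at main
  rw [Finset.mul_sum]
  have h8 : (∑ i, 8 * ∑ a, ∑ b, (A i a b)^2 : ℝ) = 8 * ∑ i, ∑ a, ∑ b, (A i a b)^2 :=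
    (Finset.mul_sum _ _ _).symm
  have h4 : (∑ i, 4 * (∑ a, A i a a)^2 : ℝ) = 4 * ∑ i, (∑ a, A i a a)^2 :=
    (Finset.mul_sum _ _ _).symm
  have hNN : 4*N^2 + 8*N = 4 * N * ((m : ℝ) + 3) := by rw [hN]; ring
  rw [Finset.mul_sum] at *
  linarith [main]
end

section
/- Let F: ℝ^{m+1} → ℝ^{n+1} be a quadratic form F(x) = Σᵢ āᵢ(xⁱ)² + Σ_{i<j} ā_{ij} xⁱ xʲ with vectors āᵢ, ā_{ij} ∈ ℝ^{n+1}. Then F maps the unit sphere S^m into the unit sphere S^n if and only if: |āᵢ| = 1 for all i; ⟨āᵢ, ā_{ij}⟩ = 0 for i ≠ j; |ā_{ij}|² + 2⟨āᵢ, āⱼ⟩ = 2 for i ≠ j; ⟨āᵢ, ā_{jk}⟩ + ⟨ā_{ij}, ā_{ik}⟩ = 0 for distinct i, j, k; and ⟨ā_{ij}, ā_{kl}⟩ + ⟨ā_{ik}, ā_{jl}⟩ + ⟨ā_{il}, ā_{jk}⟩ = 0 for distinct i, j, k, l. -/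
open Matrix BigOperators Finset

lemma sum_lt_half {N : ℕ} (f : Fin N → Fin N → ℝ) (hsym : ∀ i j, f i j = f j i)
    (hdiag : ∀ i, f i i = 0) :
    ∑ i, ∑ j, (if i < j then f i j else 0) = (1/2) * ∑ i, ∑ j, f i j := by
  have key : ∑ i, ∑ j, f i j
      = ∑ i, ∑ j, ((if i < j then f i j else 0) + (if j < i then f i j else 0)) := by
    refine Finset.sum_congr rfl fun i _ => Finset.sum_congr rfl fun j _ => ?_
    rcases lt_trichotomy i j with h|h|h
    · simp [h, not_lt_of_gt h]
    · subst h; simp [hdiag]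
    · simp [h, not_lt_of_gt h]
  have swap : ∑ i, ∑ j, (if j < i then f i j else 0)
      = ∑ i, ∑ j, (if i < j then f i j else 0) := by
    rw [Finset.sum_comm]
    exact Finset.sum_congr rfl fun i _ => Finset.sum_congr rfl fun j _ => by rw [hsym]
  rw [key]
  simp only [Finset.sum_add_distrib, swap]
  ring
lemma Fsym {m n : ℕ} (a : Fin (m + 1) → Fin (n + 1) → ℝ)
    (b : Fin (m + 1) → Fin (m + 1) → Fin (n + 1) → ℝ)
    (hbsymm : ∀ i j, b i j = b j i) (hbdiag : ∀ i, b i i = 0)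
    (x : Fin (m + 1) → ℝ) (l : Fin (n + 1)) :
    ∑ i, a i l * x i ^ 2 + ∑ i, ∑ j, (if i < j then b i j l * x i * x j else 0)
    = ∑ i, ∑ j, (if i = j then a i l else (1/2) * b i j l) * (x i * x j) := by
  rw [sum_lt_half (fun i j => b i j l * x i * x j)
    (fun i j => by show b i j l * x i * x j = b j i l * x j * x i; rw [hbsymm i j]; ring)
    (fun i => by simp [hbdiag])]
  have split : ∀ i j : Fin (m+1), (if i = j then a i l else (1/2) * b i j l) * (x i * x j)
      = (if i = j then a i l * (x i * x j) else 0)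
        + (if i = j then 0 else (1/2) * (b i j l * x i * x j)) := by
    intro i j; split_ifs <;> ring
  simp only [split, Finset.sum_add_distrib]
  have h1 : ∑ i, ∑ j, (if i = j then a i l * (x i * x j) else 0) = ∑ i, a i l * x i ^ 2 := by
    simp only [Finset.sum_ite_eq, Finset.mem_univ, if_true]
    exact Finset.sum_congr rfl fun i _ => by ring
  have h2 : ∑ i : Fin (m+1), ∑ j, (if i = j then 0 else (1/2) * (b i j l * x i * x j))
      = (1/2) * ∑ i, ∑ j, b i j l * x i * x j := by
    have : ∀ i j : Fin (m+1), (if i = j then 0 else (1/2) * (b i j l * x i * x j))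
        = (1/2) * (if i = j then 0 else b i j l * x i * x j) := by
      intro i j; split_ifs <;> ring
    simp only [this, ← Finset.mul_sum]
    congr 1
    refine Finset.sum_congr rfl fun i _ => Finset.sum_congr rfl fun j _ => ?_
    by_cases h : i = j
    · subst h; simp [hbdiag]
    · simp [h]
  rw [h1, h2]
lemma sum_sq_sum' {ι : Type*} [Fintype ι] {N : ℕ} (G : ι → Fin N → ℝ) :
    ∑ l, (∑ z, G z l)^2 = ∑ z, ∑ w, G z ⬝ᵥ G w := by
  simp only [pow_two, Finset.sum_mul_sum, dotProduct]
  rw [Finset.sum_comm]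
  exact Finset.sum_congr rfl fun z _ => by rw [Finset.sum_comm]
lemma sum_sq3 {N : ℕ} (c1 c2 c3 : ℝ) (V1 V2 V3 : Fin N → ℝ) :
    ∑ l, (c1 * V1 l + c2 * V2 l + c3 * V3 l)^2 =
      c1^2*(V1⬝ᵥV1) + c2^2*(V2⬝ᵥV2) + c3^2*(V3⬝ᵥV3)
      + 2*c1*c2*(V1⬝ᵥV2) + 2*c1*c3*(V1⬝ᵥV3) + 2*c2*c3*(V2⬝ᵥV3) := by
  simp only [dotProduct, Finset.mul_sum, ← Finset.sum_add_distrib]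
  exact Finset.sum_congr rfl fun l _ => by ring
lemma sum_sq6 {N : ℕ} (c1 c2 c3 c4 c5 c6 : ℝ) (V1 V2 V3 V4 V5 V6 : Fin N → ℝ) :
    ∑ l, (c1 * V1 l + c2 * V2 l + c3 * V3 l + c4 * V4 l + c5 * V5 l + c6 * V6 l)^2 =
      c1^2*(V1⬝ᵥV1)
      + c2^2*(V2⬝ᵥV2)
      + c3^2*(V3⬝ᵥV3)
      + c4^2*(V4⬝ᵥV4)
      + c5^2*(V5⬝ᵥV5)
      + c6^2*(V6⬝ᵥV6)
      + 2*c1*c2*(V1⬝ᵥV2)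
      + 2*c1*c3*(V1⬝ᵥV3)
      + 2*c1*c4*(V1⬝ᵥV4)
      + 2*c1*c5*(V1⬝ᵥV5)
      + 2*c1*c6*(V1⬝ᵥV6)
      + 2*c2*c3*(V2⬝ᵥV3)
      + 2*c2*c4*(V2⬝ᵥV4)
      + 2*c2*c5*(V2⬝ᵥV5)
      + 2*c2*c6*(V2⬝ᵥV6)
      + 2*c3*c4*(V3⬝ᵥV4)
      + 2*c3*c5*(V3⬝ᵥV5)
      + 2*c3*c6*(V3⬝ᵥV6)
      + 2*c4*c5*(V4⬝ᵥV5)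
      + 2*c4*c6*(V4⬝ᵥV6)
      + 2*c5*c6*(V5⬝ᵥV6) := by
  simp only [dotProduct, Finset.mul_sum, ← Finset.sum_add_distrib]
  exact Finset.sum_congr rfl fun l _ => by ring

lemma sum_sq10 {N : ℕ} (c1 c2 c3 c4 c5 c6 c7 c8 c9 c10 : ℝ) (V1 V2 V3 V4 V5 V6 V7 V8 V9 V10 : Fin N → ℝ) :
    ∑ l, (c1 * V1 l + c2 * V2 l + c3 * V3 l + c4 * V4 l + c5 * V5 l + c6 * V6 l + c7 * V7 l + c8 * V8 l + c9 * V9 l + c10 * V10 l)^2 =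
      c1^2*(V1⬝ᵥV1)
      + c2^2*(V2⬝ᵥV2)
      + c3^2*(V3⬝ᵥV3)
      + c4^2*(V4⬝ᵥV4)
      + c5^2*(V5⬝ᵥV5)
      + c6^2*(V6⬝ᵥV6)
      + c7^2*(V7⬝ᵥV7)
      + c8^2*(V8⬝ᵥV8)
      + c9^2*(V9⬝ᵥV9)
      + c10^2*(V10⬝ᵥV10)
      + 2*c1*c2*(V1⬝ᵥV2)
      + 2*c1*c3*(V1⬝ᵥV3)
      + 2*c1*c4*(V1⬝ᵥV4)
      + 2*c1*c5*(V1⬝ᵥV5)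
      + 2*c1*c6*(V1⬝ᵥV6)
      + 2*c1*c7*(V1⬝ᵥV7)
      + 2*c1*c8*(V1⬝ᵥV8)
      + 2*c1*c9*(V1⬝ᵥV9)
      + 2*c1*c10*(V1⬝ᵥV10)
      + 2*c2*c3*(V2⬝ᵥV3)
      + 2*c2*c4*(V2⬝ᵥV4)
      + 2*c2*c5*(V2⬝ᵥV5)
      + 2*c2*c6*(V2⬝ᵥV6)
      + 2*c2*c7*(V2⬝ᵥV7)
      + 2*c2*c8*(V2⬝ᵥV8)
      + 2*c2*c9*(V2⬝ᵥV9)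
      + 2*c2*c10*(V2⬝ᵥV10)
      + 2*c3*c4*(V3⬝ᵥV4)
      + 2*c3*c5*(V3⬝ᵥV5)
      + 2*c3*c6*(V3⬝ᵥV6)
      + 2*c3*c7*(V3⬝ᵥV7)
      + 2*c3*c8*(V3⬝ᵥV8)
      + 2*c3*c9*(V3⬝ᵥV9)
      + 2*c3*c10*(V3⬝ᵥV10)
      + 2*c4*c5*(V4⬝ᵥV5)
      + 2*c4*c6*(V4⬝ᵥV6)
      + 2*c4*c7*(V4⬝ᵥV7)
      + 2*c4*c8*(V4⬝ᵥV8)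
      + 2*c4*c9*(V4⬝ᵥV9)
      + 2*c4*c10*(V4⬝ᵥV10)
      + 2*c5*c6*(V5⬝ᵥV6)
      + 2*c5*c7*(V5⬝ᵥV7)
      + 2*c5*c8*(V5⬝ᵥV8)
      + 2*c5*c9*(V5⬝ᵥV9)
      + 2*c5*c10*(V5⬝ᵥV10)
      + 2*c6*c7*(V6⬝ᵥV7)
      + 2*c6*c8*(V6⬝ᵥV8)
      + 2*c6*c9*(V6⬝ᵥV9)
      + 2*c6*c10*(V6⬝ᵥV10)
      + 2*c7*c8*(V7⬝ᵥV8)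
      + 2*c7*c9*(V7⬝ᵥV9)
      + 2*c7*c10*(V7⬝ᵥV10)
      + 2*c8*c9*(V8⬝ᵥV9)
      + 2*c8*c10*(V8⬝ᵥV10)
      + 2*c9*c10*(V9⬝ᵥV10) := by
  simp only [dotProduct, Finset.mul_sum, ← Finset.sum_add_distrib]
  exact Finset.sum_congr rfl fun l _ => by ring

lemma xsq2 {N : ℕ} (i j : Fin (N+1)) (hij : i ≠ j) (s : ℝ) :
    ∑ k, ((if k = i then (1:ℝ) else 0) + (if k = j then s else 0))^2 = 1 + s^2 := by
  have pt : ∀ k, ((if k = i then (1:ℝ) else 0) + (if k = j then s else 0))^2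
      = (if k = i then (1:ℝ) else 0) + (if k = j then s^2 else 0) := by
    intro k
    by_cases h1 : k = i <;> by_cases h2 : k = j <;> simp_all
  simp only [pt, Finset.sum_add_distrib, Finset.sum_ite_eq', Finset.mem_univ, if_true]

lemma eval2 {m n : ℕ} (a : Fin (m + 1) → Fin (n + 1) → ℝ)
    (b : Fin (m + 1) → Fin (m + 1) → Fin (n + 1) → ℝ)
    (hbsymm : ∀ i j, b i j = b j i)
    (i j : Fin (m + 1)) (hij : i ≠ j) (s : ℝ) (l : Fin (n + 1)) :
    ∑ p, ∑ q, (if p = q then a p l else 1/2 * b p q l) *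
      (((if p = i then (1:ℝ) else 0) + (if p = j then s else 0)) *
       ((if q = i then (1:ℝ) else 0) + (if q = j then s else 0)))
    = 1 * a i l + s^2 * a j l + s * b i j l := by
  simp [mul_add, add_mul, mul_ite, ite_mul, Finset.sum_add_distrib, Finset.sum_ite_irrel,
    Finset.sum_ite_eq', Finset.sum_const_zero, hij, Ne.symm hij]
  linear_combination (s/2) * congrFun (hbsymm j i) l
lemma xsq1 {N : ℕ} (i : Fin (N+1)) :
    ∑ k, (if k = i then (1:ℝ) else 0)^2 = 1 := by
  have pt : ∀ k, ((if k = i then (1:ℝ) else 0))^2 = (if k = i then (1:ℝ) else 0) := by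
    intro k; by_cases h1 : k = i <;> simp_all
  simp only [pt, Finset.sum_ite_eq', Finset.mem_univ, if_true]

lemma eval1 {m n : ℕ} (a : Fin (m + 1) → Fin (n + 1) → ℝ)
    (b : Fin (m + 1) → Fin (m + 1) → Fin (n + 1) → ℝ)
    (i : Fin (m + 1)) (l : Fin (n + 1)) :
    ∑ p, ∑ q, (if p = q then a p l else 1/2 * b p q l) *
      ((if p = i then (1:ℝ) else 0) * (if q = i then (1:ℝ) else 0))
    = a i l := by
  simp [mul_ite, ite_mul, Finset.sum_ite_irrel, Finset.sum_ite_eq', Finset.sum_const_zero]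

lemma xsq3 {N : ℕ} (i j k : Fin (N+1)) (hij : i ≠ j) (hik : i ≠ k) (hjk : j ≠ k) (s t : ℝ) :
    ∑ w, ((if w = i then (1:ℝ) else 0) + (if w = j then s else 0) + (if w = k then t else 0))^2
    = 1 + s^2 + t^2 := by
  have pt : ∀ w, ((if w = i then (1:ℝ) else 0) + (if w = j then s else 0) + (if w = k then t else 0))^2
      = (if w = i then (1:ℝ) else 0) + (if w = j then s^2 else 0) + (if w = k then t^2 else 0) := by
    intro w
    by_cases h1 : w = i <;> by_cases h2 : w = j <;> by_cases h3 : w = k <;> simp_all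
  simp only [pt, Finset.sum_add_distrib, Finset.sum_ite_eq', Finset.mem_univ, if_true]

lemma xsq4 {N : ℕ} (i j k l : Fin (N+1)) (hij : i ≠ j) (hik : i ≠ k) (hil : i ≠ l)
    (hjk : j ≠ k) (hjl : j ≠ l) (hkl : k ≠ l) (s t u : ℝ) :
    ∑ w, ((if w = i then (1:ℝ) else 0) + (if w = j then s else 0) + (if w = k then t else 0)
      + (if w = l then u else 0))^2 = 1 + s^2 + t^2 + u^2 := by
  have pt : ∀ w, ((if w = i then (1:ℝ) else 0) + (if w = j then s else 0) + (if w = k then t else 0)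
      + (if w = l then u else 0))^2
      = (if w = i then (1:ℝ) else 0) + (if w = j then s^2 else 0) + (if w = k then t^2 else 0)
        + (if w = l then u^2 else 0) := by
    intro w
    by_cases h1 : w = i <;> by_cases h2 : w = j <;> by_cases h3 : w = k <;> by_cases h4 : w = l <;>
      simp_all
  simp only [pt, Finset.sum_add_distrib, Finset.sum_ite_eq', Finset.mem_univ, if_true]

lemma eval3 {m n : ℕ} (a : Fin (m + 1) → Fin (n + 1) → ℝ)
    (b : Fin (m + 1) → Fin (m + 1) → Fin (n + 1) → ℝ)
    (hbsymm : ∀ i j, b i j = b j i)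
    (i j k : Fin (m + 1)) (hij : i ≠ j) (hik : i ≠ k) (hjk : j ≠ k) (s t : ℝ) (l : Fin (n + 1)) :
    ∑ p, ∑ q, (if p = q then a p l else 1/2 * b p q l) *
      (((if p = i then (1:ℝ) else 0) + (if p = j then s else 0) + (if p = k then t else 0)) *
       ((if q = i then (1:ℝ) else 0) + (if q = j then s else 0) + (if q = k then t else 0)))
    = 1 * a i l + s^2 * a j l + t^2 * a k l + s * b i j l + t * b i k l + (s*t) * b j k l := by
  simp [mul_add, add_mul, mul_ite, ite_mul, Finset.sum_add_distrib, Finset.sum_ite_irrel,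
    Finset.sum_ite_eq', Finset.sum_const_zero, hij, hik, hjk, Ne.symm hij, Ne.symm hik, Ne.symm hjk]
  linear_combination (s/2) * congrFun (hbsymm j i) l + (t/2) * congrFun (hbsymm k i) l
    + (s*t/2) * congrFun (hbsymm k j) l

lemma eval4 {m n : ℕ} (a : Fin (m + 1) → Fin (n + 1) → ℝ)
    (b : Fin (m + 1) → Fin (m + 1) → Fin (n + 1) → ℝ)
    (hbsymm : ∀ i j, b i j = b j i)
    (i j k l : Fin (m + 1)) (hij : i ≠ j) (hik : i ≠ k) (hil : i ≠ l)
    (hjk : j ≠ k) (hjl : j ≠ l) (hkl : k ≠ l) (s t u : ℝ) (w : Fin (n + 1)) :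
    ∑ p, ∑ q, (if p = q then a p w else 1/2 * b p q w) *
      (((if p = i then (1:ℝ) else 0) + (if p = j then s else 0) + (if p = k then t else 0)
          + (if p = l then u else 0)) *
       ((if q = i then (1:ℝ) else 0) + (if q = j then s else 0) + (if q = k then t else 0)
          + (if q = l then u else 0)))
    = 1 * a i w + s^2 * a j w + t^2 * a k w + u^2 * a l w + s * b i j w + t * b i k w
      + u * b i l w + (s*t) * b j k w + (s*u) * b j l w + (t*u) * b k l w := by
  simp [mul_add, add_mul, mul_ite, ite_mul, Finset.sum_add_distrib, Finset.sum_ite_irrel,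
    Finset.sum_ite_eq', Finset.sum_const_zero, hij, hik, hil, hjk, hjl, hkl,
    Ne.symm hij, Ne.symm hik, Ne.symm hil, Ne.symm hjk, Ne.symm hjl, Ne.symm hkl]
  linear_combination (s/2) * congrFun (hbsymm j i) w + (t/2) * congrFun (hbsymm k i) w
    + (u/2) * congrFun (hbsymm l i) w + (s*t/2) * congrFun (hbsymm k j) w
    + (s*u/2) * congrFun (hbsymm l j) w + (t*u/2) * congrFun (hbsymm l k) w
lemma Rlem {m n : ℕ} (a : Fin (m + 1) → Fin (n + 1) → ℝ)
    (b : Fin (m + 1) → Fin (m + 1) → Fin (n + 1) → ℝ)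
    (hbsymm : ∀ i j, b i j = b j i)
    (C : Fin (m + 1) → Fin (m + 1) → Fin (n + 1) → ℝ)
    (hC : ∀ i j, C i j = if i = j then a i else (1/2 : ℝ) • b i j)
    (ha : ∀ i, a i ⬝ᵥ a i = 1)
    (h2 : ∀ i j, i ≠ j → a i ⬝ᵥ b i j = 0)
    (h3 : ∀ i j, i ≠ j → b i j ⬝ᵥ b i j + 2 * (a i ⬝ᵥ a j) = 2)
    (h4 : ∀ i j k, i ≠ j → i ≠ k → j ≠ k → a i ⬝ᵥ b j k + b i j ⬝ᵥ b i k = 0)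
    (h5 : ∀ i j k l, i ≠ j → i ≠ k → i ≠ l → j ≠ k → j ≠ l → k ≠ l →
        b i j ⬝ᵥ b k l + b i k ⬝ᵥ b j l + b i l ⬝ᵥ b j k = 0) :
    ∀ i j p q, C i j ⬝ᵥ C p q + C i p ⬝ᵥ C j q + C i q ⬝ᵥ C j p
      = (if i = j then (1:ℝ) else 0) * (if p = q then (1:ℝ) else 0)
      + (if i = p then (1:ℝ) else 0) * (if j = q then (1:ℝ) else 0)
      + (if i = q then (1:ℝ) else 0) * (if j = p then (1:ℝ) else 0) := by
  have symL : ∀ (v : Fin (n+1) → ℝ) (i j), b i j ⬝ᵥ v = b j i ⬝ᵥ v :=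
    fun v i j => by rw [hbsymm i j]
  have symR : ∀ (v : Fin (n+1) → ℝ) (i j), v ⬝ᵥ b i j = v ⬝ᵥ b j i :=
    fun v i j => by rw [hbsymm i j]
  intro i j p q
  by_cases hij : i = j
  · subst hij
    by_cases hip : i = p
    · subst hip
      by_cases hiq : i = q
      · subst hiq
        simp [hC]
        linear_combination 3 * ha i
      · simp [hC, hiq, smul_dotProduct, dotProduct_smul, smul_eq_mul]
        linear_combination (3/2) * h2 i q hiq + (1/2) * dotProduct_comm (b i q) (a i)
    · by_cases hiq : i = q
      · subst hiq
        simp [hC, hip, Ne.symm hip, smul_dotProduct, dotProduct_smul, smul_eq_mul]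
        linear_combination (3/2) * h2 i p hip + (1/2) * symR (a i) p i
          + (1/2) * dotProduct_comm (b i p) (a i)
      · by_cases hpq : p = q
        · subst hpq
          simp [hC, hip, smul_dotProduct, dotProduct_smul, smul_eq_mul]
          linear_combination (1/2) * h3 i p hip
        · simp [hC, hip, hiq, hpq, smul_dotProduct, dotProduct_smul, smul_eq_mul]
          linear_combination (1/2) * h4 i p q hip hiq hpq
            + (1/4) * dotProduct_comm (b i q) (b i p)
  · by_cases hip : i = p
    · subst hip
      by_cases hjq : j = q
      · subst hjq
        simp [hC, hij, Ne.symm hij, smul_dotProduct, dotProduct_smul, smul_eq_mul]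
        linear_combination (1/2) * h3 i j hij + (1/4) * symR (b i j) j i
      · by_cases hiq : i = q
        · subst hiq
          simp [hC, hij, Ne.symm hij, hjq, smul_dotProduct, dotProduct_smul, smul_eq_mul]
          linear_combination (3/2) * h2 i j hij + (1/2) * dotProduct_comm (b i j) (a i)
            + symR (a i) j i
        · simp [hC, hij, Ne.symm hij, hiq, hjq, smul_dotProduct, dotProduct_smul, smul_eq_mul]
          linear_combination (1/2) * h4 i j q hij hiq hjq + (1/4) * symR (b i q) j i
            + (1/4) * dotProduct_comm (b i q) (b i j)
    · by_cases hjp : j = p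
      · subst hjp
        by_cases hiq : i = q
        · subst hiq
          simp [hC, hij, Ne.symm hij, smul_dotProduct, dotProduct_smul, smul_eq_mul]
          linear_combination (1/2) * h3 i j hij + (1/2) * symR (b i j) j i
        · by_cases hjq : j = q
          · subst hjq
            simp [hC, hij, Ne.symm hij, hiq, smul_dotProduct, dotProduct_smul, smul_eq_mul]
            linear_combination (3/2) * dotProduct_comm (b i j) (a j) + (3/2) * symR (a j) i j
              + (3/2) * h2 j i (Ne.symm hij)
          · simp [hC, hij, Ne.symm hij, hiq, hjq, smul_dotProduct, dotProduct_smul, smul_eq_mul]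
            linear_combination (1/2) * h4 j i q (Ne.symm hij) hjq hiq
              + (1/2) * symL (b j q) i j + (1/2) * dotProduct_comm (b i q) (a j)
      · by_cases hiq : i = q
        · subst hiq
          simp [hC, hij, hip, Ne.symm hij, Ne.symm hip, hjp, smul_dotProduct, dotProduct_smul, smul_eq_mul]
          linear_combination (1/2) * h4 i j p hij hip hjp + (1/4) * symR (b i j) p i
            + (1/4) * symR (b i p) j i + (1/4) * dotProduct_comm (b i p) (b i j)
        · by_cases hjq : j = q
          · subst hjq
            simp [hC, hij, hip, hjp, hiq, Ne.symm hjp, Ne.symm hij, smul_dotProduct, dotProduct_smul, smul_eq_mul]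
            linear_combination (1/2) * h4 j i p (Ne.symm hij) hjp hip
              + (1/4) * symL (b p j) i j + (1/4) * symR (b j i) p j
              + (1/2) * dotProduct_comm (b i p) (a j) + (1/4) * symL (b j p) i j
          · by_cases hpq : p = q
            · subst hpq
              simp [hC, hij, hip, hjp, hiq, hjq, smul_dotProduct, dotProduct_smul, smul_eq_mul]
              linear_combination (1/2) * h4 p i j (Ne.symm hip) (Ne.symm hjp) hij
                + (1/2) * dotProduct_comm (b i j) (a p) + (1/2) * symL (b j p) i p
                + (1/2) * symR (b p i) j p
            · simp [hC, hij, hip, hjp, hiq, hjq, hpq, smul_dotProduct, dotProduct_smul, smul_eq_mul]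
              linear_combination (1/4) * h5 i j p q hij hip hiq hjp hjq hpq
lemma reverse_dir {m n : ℕ} (a : Fin (m + 1) → Fin (n + 1) → ℝ)
    (b : Fin (m + 1) → Fin (m + 1) → Fin (n + 1) → ℝ)
    (hbsymm : ∀ i j, b i j = b j i) (hbdiag : ∀ i, b i i = 0)
    (F : (Fin (m + 1) → ℝ) → Fin (n + 1) → ℝ)
    (hF : ∀ x l, F x l = ∑ i, a i l * x i ^ 2
      + ∑ i, ∑ j, if i < j then b i j l * x i * x j else 0)
    (r1 : ∀ i, ∑ l, a i l ^ 2 = 1)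
    (r2 : ∀ i j, i ≠ j → a i ⬝ᵥ b i j = 0)
    (r3 : ∀ i j, i ≠ j → (∑ l, b i j l ^ 2) + 2 * (a i ⬝ᵥ a j) = 2)
    (r4 : ∀ i j k, i ≠ j → i ≠ k → j ≠ k → a i ⬝ᵥ b j k + b i j ⬝ᵥ b i k = 0)
    (r5 : ∀ i j k l, i ≠ j → i ≠ k → i ≠ l → j ≠ k → j ≠ l → k ≠ l →
        b i j ⬝ᵥ b k l + b i k ⬝ᵥ b j l + b i l ⬝ᵥ b j k = 0)
    (x : Fin (m + 1) → ℝ) :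
    ∑ l, F x l ^ 2 = (∑ k, x k ^ 2) ^ 2 := by
  have selfdot : ∀ (v : Fin (n+1) → ℝ), v ⬝ᵥ v = ∑ l, v l ^ 2 := by
    intro v; simp [dotProduct, pow_two]
  set C : Fin (m + 1) → Fin (m + 1) → Fin (n + 1) → ℝ :=
    fun i j => if i = j then a i else (1/2 : ℝ) • b i j with hCdef
  have hC : ∀ i j, C i j = if i = j then a i else (1/2 : ℝ) • b i j := fun i j => rfl
  have key := Rlem a b hbsymm C hC
    (fun i => by rw [selfdot]; exact r1 i) r2
    (fun i j hij => by rw [selfdot]; exact r3 i j hij) r4 r5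
  -- pointwise formula for F
  have hFx : ∀ l, F x l = ∑ z : Fin (m+1) × Fin (m+1), ((x z.1 * x z.2) • C z.1 z.2) l := by
    intro l
    rw [hF, Fsym a b hbsymm hbdiag x l, Fintype.sum_prod_type]
    refine Finset.sum_congr rfl fun i _ => Finset.sum_congr rfl fun j _ => ?_
    by_cases h : i = j <;> simp [hC, h, Pi.smul_apply, smul_eq_mul] <;> ring
  have hmain : ∑ l, F x l ^ 2
      = ∑ i, ∑ j, ∑ p, ∑ q, (x i * x j * x p * x q) * (C i j ⬝ᵥ C p q) := by
    calc ∑ l, F x l ^ 2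
        = ∑ l, (∑ z : Fin (m+1) × Fin (m+1), ((x z.1 * x z.2) • C z.1 z.2) l)^2 := by
          exact Finset.sum_congr rfl fun l _ => by rw [hFx l]
      _ = ∑ z : Fin (m+1) × Fin (m+1), ∑ w : Fin (m+1) × Fin (m+1),
            ((x z.1 * x z.2) • C z.1 z.2) ⬝ᵥ ((x w.1 * x w.2) • C w.1 w.2) := sum_sq_sum' _
      _ = ∑ i, ∑ j, ∑ p, ∑ q, (x i * x j * x p * x q) * (C i j ⬝ᵥ C p q) := by
          rw [Fintype.sum_prod_type]
          refine Finset.sum_congr rfl fun i _ => Finset.sum_congr rfl fun j _ => ?_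
          rw [Fintype.sum_prod_type]
          refine Finset.sum_congr rfl fun p _ => Finset.sum_congr rfl fun q _ => ?_
          simp only [smul_dotProduct, dotProduct_smul, smul_eq_mul]
          ring
  set T := ∑ i, ∑ j, ∑ p, ∑ q, (x i * x j * x p * x q) * (C i j ⬝ᵥ C p q) with hT
  have hT2 : ∑ i, ∑ j, ∑ p, ∑ q, (x i * x j * x p * x q) * (C i p ⬝ᵥ C j q) = T := by
    refine Finset.sum_congr rfl fun i _ => ?_
    rw [Finset.sum_comm]
    exact Finset.sum_congr rfl fun j _ => Finset.sum_congr rfl fun p _ =>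
      Finset.sum_congr rfl fun q _ => by ring
  have hT3 : ∑ i, ∑ j, ∑ p, ∑ q, (x i * x j * x p * x q) * (C i q ⬝ᵥ C j p) = T := by
    refine Finset.sum_congr rfl fun i _ => ?_
    have step1 : ∑ j, ∑ p, ∑ q, (x i * x j * x p * x q) * (C i q ⬝ᵥ C j p)
        = ∑ j, ∑ q, ∑ p, (x i * x j * x p * x q) * (C i q ⬝ᵥ C j p) :=
      Finset.sum_congr rfl fun j _ => by rw [Finset.sum_comm]
    rw [step1, Finset.sum_comm]
    exact Finset.sum_congr rfl fun j _ => Finset.sum_congr rfl fun p _ =>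
      Finset.sum_congr rfl fun q _ => by ring
  have hD : ∑ i, ∑ j, ∑ p, ∑ q, (x i * x j * x p * x q) *
      ((if i = j then (1:ℝ) else 0) * (if p = q then (1:ℝ) else 0)
      + (if i = p then (1:ℝ) else 0) * (if j = q then (1:ℝ) else 0)
      + (if i = q then (1:ℝ) else 0) * (if j = p then (1:ℝ) else 0))
      = 3 * (∑ k, x k ^ 2) ^ 2 := by
    have e1 : (∑ k, x k ^ 2) ^ 2 = ∑ i, ∑ p, x i ^2 * x p ^2 := by
      rw [pow_two, Finset.sum_mul_sum]
    simp only [mul_add, Finset.sum_add_distrib]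
    simp only [mul_ite, ite_mul, mul_zero, zero_mul, mul_one,
      Finset.sum_ite_irrel, Finset.sum_ite_eq, Finset.sum_ite_eq',
      Finset.mem_univ, if_true, Finset.sum_const_zero]
    rw [e1]
    have g1 : ∑ i, ∑ j, x i * x i * x j * x j = ∑ i, ∑ p, x i ^2 * x p ^2 :=
      Finset.sum_congr rfl fun i _ => Finset.sum_congr rfl fun j _ => by ring
    have g2 : ∑ i, ∑ j, x i * x j * x i * x j = ∑ i, ∑ p, x i ^2 * x p ^2 :=
      Finset.sum_congr rfl fun i _ => Finset.sum_congr rfl fun j _ => by ring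
    have g3 : ∑ i, ∑ j, x i * x j * x j * x i = ∑ i, ∑ p, x i ^2 * x p ^2 :=
      Finset.sum_congr rfl fun i _ => Finset.sum_congr rfl fun j _ => by ring
    rw [g1, g2, g3]
    ring
  have hcomb : ∑ i, ∑ j, ∑ p, ∑ q, ((x i * x j * x p * x q) * (C i j ⬝ᵥ C p q)
      + (x i * x j * x p * x q) * (C i p ⬝ᵥ C j q)
      + (x i * x j * x p * x q) * (C i q ⬝ᵥ C j p))
      = 3 * (∑ k, x k ^ 2) ^ 2 := by
    rw [← hD]
    refine Finset.sum_congr rfl fun i _ => Finset.sum_congr rfl fun j _ =>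
      Finset.sum_congr rfl fun p _ => Finset.sum_congr rfl fun q _ => ?_
    linear_combination (x i * x j * x p * x q) * key i j p q
  have hsplit : ∑ i, ∑ j, ∑ p, ∑ q, ((x i * x j * x p * x q) * (C i j ⬝ᵥ C p q)
      + (x i * x j * x p * x q) * (C i p ⬝ᵥ C j q)
      + (x i * x j * x p * x q) * (C i q ⬝ᵥ C j p))
      = T + T + T := by
    simp only [Finset.sum_add_distrib]
    rw [hT2, hT3]
  rw [hmain]
  have : T + T + T = 3 * (∑ k, x k ^ 2) ^ 2 := by rw [← hsplit, hcomb]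
  linarith

set_option maxHeartbeats 3200000 in
/-- A quadratic form `F(x) = Σᵢ āᵢ(xⁱ)² + Σ_{i<j} ā_{ij} xⁱxʲ` maps the
unit sphere `S^m` into `S^n` (equivalently `|F(x)|² = |x|⁴` for all `x`) if and only if
the coefficient vectors satisfy the sphericity relations. -/
theorem stmt4 (m n : ℕ) (a : Fin (m + 1) → Fin (n + 1) → ℝ)
    (b : Fin (m + 1) → Fin (m + 1) → Fin (n + 1) → ℝ)
    (hbsymm : ∀ i j, b i j = b j i) (hbdiag : ∀ i, b i i = 0)
    (F : (Fin (m + 1) → ℝ) → Fin (n + 1) → ℝ)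
    (hF : ∀ x l, F x l = ∑ i, a i l * x i ^ 2
      + ∑ i, ∑ j, if i < j then b i j l * x i * x j else 0) :
    (∀ x : Fin (m + 1) → ℝ, ∑ l, F x l ^ 2 = (∑ k, x k ^ 2) ^ 2)
    ↔ ((∀ i, ∑ l, a i l ^ 2 = 1)
      ∧ (∀ i j, i ≠ j → a i ⬝ᵥ b i j = 0)
      ∧ (∀ i j, i ≠ j → (∑ l, b i j l ^ 2) + 2 * (a i ⬝ᵥ a j) = 2)
      ∧ (∀ i j k, i ≠ j → i ≠ k → j ≠ k →
          a i ⬝ᵥ b j k + b i j ⬝ᵥ b i k = 0)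
      ∧ (∀ i j k l, i ≠ j → i ≠ k → i ≠ l → j ≠ k → j ≠ l → k ≠ l →
          b i j ⬝ᵥ b k l + b i k ⬝ᵥ b j l + b i l ⬝ᵥ b j k = 0)) := by
  constructor
  · intro hx
    have hFsym' : ∀ (x : Fin (m+1) → ℝ) (l : Fin (n+1)), F x l
        = ∑ p, ∑ q, (if p = q then a p l else 1/2 * b p q l) * (x p * x q) :=
      fun x l => by rw [hF]; exact Fsym a b hbsymm hbdiag x l
    have selfdot : ∀ (v : Fin (n+1) → ℝ), ∑ l, v l ^ 2 = v ⬝ᵥ v :=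
      fun v => by simp [dotProduct, pow_two]
    have R1 : ∀ i, ∑ l, a i l ^ 2 = 1 := by
      intro i
      have h : ∑ l, F (fun p => if p = i then (1:ℝ) else 0) l ^ 2
          = (∑ k, (if k = i then (1:ℝ) else 0) ^ 2) ^ 2 := hx _
      rw [xsq1 i] at h
      have e : ∀ l, F (fun p => if p = i then (1:ℝ) else 0) l = a i l :=
        fun l => by rw [hFsym']; exact eval1 a b i l
      have h2 : ∑ l, a i l ^ 2 = (1:ℝ)^2 := by
        rw [← h]; exact Finset.sum_congr rfl fun l _ => by rw [e l]
      simpa using h2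
    have R23 : ∀ i j, i ≠ j →
        a i ⬝ᵥ b i j = 0 ∧ (∑ l, b i j l ^ 2) + 2 * (a i ⬝ᵥ a j) = 2 := by
      intro i j hij
      have mk : ∀ s : ℝ, ∑ l, (1 * a i l + s^2 * a j l + s * b i j l)^2 = (1 + s^2)^2 := by
        intro s
        have h : ∑ l, F (fun p => (if p = i then (1:ℝ) else 0) + (if p = j then s else 0)) l ^ 2
            = (∑ k, ((if k = i then (1:ℝ) else 0) + (if k = j then s else 0)) ^ 2) ^ 2 := hx _
        rw [xsq2 i j hij s] at h
        rw [← h]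
        exact Finset.sum_congr rfl fun l _ => by
          rw [hFsym', eval2 a b hbsymm i j hij s l]
      simp only [sum_sq3] at mk
      have haii : a i ⬝ᵥ a i = 1 := by rw [← selfdot (a i)]; exact R1 i
      have hajj : a j ⬝ᵥ a j = 1 := by rw [← selfdot (a j)]; exact R1 j
      have e1 := mk 1
      have e2 := mk (-1)
      have e3 := mk 2
      norm_num at e1 e2 e3
      constructor
      · linarith
      · rw [selfdot (b i j)]; linarith
    have R4 : ∀ i j k, i ≠ j → i ≠ k → j ≠ k → a i ⬝ᵥ b j k + b i j ⬝ᵥ b i k = 0 := by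
      intro i j k hij hik hjk
      have mk : ∀ s t : ℝ, ∑ l, (1 * a i l + s^2 * a j l + t^2 * a k l
          + s * b i j l + t * b i k l + (s*t) * b j k l)^2 = (1 + s^2 + t^2)^2 := by
        intro s t
        have h : ∑ l, F (fun p => (if p = i then (1:ℝ) else 0) + (if p = j then s else 0)
              + (if p = k then t else 0)) l ^ 2
            = (∑ w, ((if w = i then (1:ℝ) else 0) + (if w = j then s else 0)
              + (if w = k then t else 0)) ^ 2) ^ 2 := hx _
        rw [xsq3 i j k hij hik hjk s t] at h
        rw [← h]
        exact Finset.sum_congr rfl fun l _ => by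
          rw [hFsym', eval3 a b hbsymm i j k hij hik hjk s t l]
      simp only [sum_sq6] at mk
      have k1 : a j ⬝ᵥ b j k = 0 := (R23 j k hjk).1
      have k2 : a k ⬝ᵥ b j k = 0 := by
        rw [show b j k = b k j from hbsymm j k]; exact (R23 k j (Ne.symm hjk)).1
      have e11 := mk 1 1
      have e12 := mk 1 (-1)
      have e21 := mk (-1) 1
      have e22 := mk (-1) (-1)
      norm_num at e11 e12 e21 e22
      linarith
    have R5 : ∀ i j k l, i ≠ j → i ≠ k → i ≠ l → j ≠ k → j ≠ l → k ≠ l →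
        b i j ⬝ᵥ b k l + b i k ⬝ᵥ b j l + b i l ⬝ᵥ b j k = 0 := by
      intro i j k l hij hik hil hjk hjl hkl
      have mk : ∀ s t u : ℝ, ∑ w, (1 * a i w + s^2 * a j w + t^2 * a k w + u^2 * a l w
          + s * b i j w + t * b i k w + u * b i l w + (s*t) * b j k w + (s*u) * b j l w
          + (t*u) * b k l w)^2 = (1 + s^2 + t^2 + u^2)^2 := by
        intro s t u
        have h : ∑ w, F (fun p => (if p = i then (1:ℝ) else 0) + (if p = j then s else 0)
              + (if p = k then t else 0) + (if p = l then u else 0)) w ^ 2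
            = (∑ w, ((if w = i then (1:ℝ) else 0) + (if w = j then s else 0)
              + (if w = k then t else 0) + (if w = l then u else 0)) ^ 2) ^ 2 := hx _
        rw [xsq4 i j k l hij hik hil hjk hjl hkl s t u] at h
        rw [← h]
        exact Finset.sum_congr rfl fun w _ => by
          rw [hFsym', eval4 a b hbsymm i j k l hij hik hil hjk hjl hkl s t u w]
      simp only [sum_sq10] at mk
      have f1 := mk 1 1 1
      have f2 := mk 1 1 (-1)
      have f3 := mk 1 (-1) 1
      have f4 := mk 1 (-1) (-1)
      have f5 := mk (-1) 1 1
      have f6 := mk (-1) 1 (-1)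
      have f7 := mk (-1) (-1) 1
      have f8 := mk (-1) (-1) (-1)
      norm_num at f1 f2 f3 f4 f5 f6 f7 f8
      linarith
    exact ⟨R1, fun i j h => (R23 i j h).1, fun i j h => (R23 i j h).2, R4, R5⟩
  · rintro ⟨r1, r2, r3, r4, r5⟩ x
    exact reverse_dir a b hbsymm hbdiag F hF r1 r2 r3 r4 r5 x
end

section
/- Let F: ℝ^{m+1} → ℝ^{n+1} be a quadratic form mapping S^m into S^n, written F(x) = Σᵢ āᵢ(xⁱ)² + Σ_{i<j} ā_{ij} xⁱ xʲ, and suppose S = A₁² + ... + A_{n+1}² is diagonal with diagonal entries s₁, ..., s_{m+1}. Then s_k = 1 + (1/4) Σ_{i≠k} |ā_{ik}|² for each k. In particular, s_k ≥ 1. -/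
open Matrix BigOperators Finset

/-- For a quadratic form mapping `S^m` into `S^n` given by symmetric
matrices `A₁,…,A_{n+1}` (with `(Aₗ)_{kk} = a^l_k` and off-diagonal entries
`(Aₗ)_{ik} = (1/2)a^l_{ik}`), if `S = ΣₗAₗ²` is diagonal with entries `s₁,…,s_{m+1}`,
then `s_k = 1 + (1/4)Σ_{i≠k}|ā_{ik}|²`; in particular `s_k ≥ 1`. -/
theorem stmt5 (m n : ℕ) (A : Fin (n + 1) → Matrix (Fin (m + 1)) (Fin (m + 1)) ℝ)
    (hsymm : ∀ l, (A l).IsSymm)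
    (hsphere : ∀ x : Fin (m + 1) → ℝ,
      ∑ l, (x ⬝ᵥ (A l).mulVec x) ^ 2 = (∑ k, x k ^ 2) ^ 2)
    (s : Fin (m + 1) → ℝ)
    (hS : ∑ l, (A l) ^ 2 = Matrix.diagonal s) :
    ∀ k, s k = 1 + (1 / 4) * ∑ i ∈ Finset.univ.erase k, ∑ l, (2 * (A l) i k) ^ 2
      ∧ 1 ≤ s k := by
  intro k
  -- diagonal entries squared sum to 1
  have h1 : ∑ l, (A l k k) ^ 2 = 1 := by
    have := hsphere (fun i => if i = k then 1 else 0)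
    simpa [dotProduct, mulVec, mul_ite, ite_mul, Finset.sum_ite_eq',
      Finset.sum_ite_eq] using this
  -- diagonal entry of S
  have h2 : s k = ∑ l, ∑ i, (A l i k) ^ 2 := by
    have h := congrArg (fun M : Matrix (Fin (m+1)) (Fin (m+1)) ℝ => M k k) hS
    simp only [Matrix.sum_apply, Matrix.diagonal_apply_eq, pow_two, Matrix.mul_apply] at h
    rw [← h]
    refine Finset.sum_congr rfl fun l _ => Finset.sum_congr rfl fun i _ => ?_
    have := (hsymm l).apply i k
    rw [pow_two, this]
  have h3 : s k = 1 + ∑ i ∈ Finset.univ.erase k, ∑ l, (A l i k) ^ 2 := by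
    rw [h2, Finset.sum_comm, ← Finset.add_sum_erase (h := Finset.mem_univ k), h1]
  have h4 : (1 / 4 : ℝ) * ∑ i ∈ Finset.univ.erase k, ∑ l, (2 * (A l) i k) ^ 2
      = ∑ i ∈ Finset.univ.erase k, ∑ l, (A l i k) ^ 2 := by
    rw [Finset.mul_sum]
    refine Finset.sum_congr rfl fun i _ => ?_
    rw [Finset.mul_sum]
    exact Finset.sum_congr rfl fun l _ => by ring
  constructor
  · rw [h3, h4]
  · rw [h3]
    have : (0:ℝ) ≤ ∑ i ∈ Finset.univ.erase k, ∑ l, (A l i k) ^ 2 :=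
      Finset.sum_nonneg fun i _ => Finset.sum_nonneg fun l _ => sq_nonneg _
    linarith
end

section
/- Let F: ℝ^{m+1} → ℝ^{n+1} be a quadratic form with symmetric matrices A₁,...,A_{n+1}, mapping S^m into S^n, and let S = A₁² + ... + A_{n+1}². If S = α·I_{m+1} for a real constant α, then the energy density of the restriction φ: S^m → S^n is constant, with |dφ|² = 4(α - 1) where |dφ|² = |dF|² - 4 on S^m. -/
open Matrix BigOperators Finset

lemma dot_sum_mulVec {m : ℕ} {ι : Type*} [DecidableEq ι] (s : Finset ι)
    (B : ι → Matrix (Fin m) (Fin m) ℝ) (x : Fin m → ℝ) :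
    x ⬝ᵥ (∑ i ∈ s, B i).mulVec x = ∑ i ∈ s, x ⬝ᵥ (B i).mulVec x := by
  induction s using Finset.induction_on with
  | empty => simp [Matrix.zero_mulVec]
  | insert _ _ h ih =>
      rw [Finset.sum_insert h, Finset.sum_insert h, Matrix.add_mulVec,
        dotProduct_add, ih]

/-- If `S = A₁² + ⋯ + A_{n+1}² = α·I`, then the restriction
`φ : S^m → S^n` of the quadratic form has constant energy density: on the unit sphere,
`|dφ|² = |dF|² - 4 = 4(α - 1)`, where `|dF(x)|²` is the squared Hilbert–Schmidt norm of
the Jacobian of `F` (whose `i`-th row is `2XᵀAᵢ`). -/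
theorem stmt7 (m n : ℕ) (A : Fin (n + 1) → Matrix (Fin (m + 1)) (Fin (m + 1)) ℝ)
    (hsymm : ∀ i, (A i).IsSymm)
    (hsphere : ∀ x : Fin (m + 1) → ℝ,
      ∑ i, (x ⬝ᵥ (A i).mulVec x) ^ 2 = (∑ k, x k ^ 2) ^ 2)
    (α : ℝ) (hS : ∑ i, (A i) ^ 2 = α • (1 : Matrix (Fin (m + 1)) (Fin (m + 1)) ℝ)) :
    ∀ x : Fin (m + 1) → ℝ, ∑ k, x k ^ 2 = 1 →
      (∑ i, ∑ j, (2 * Matrix.vecMul x (A i) j) ^ 2) - 4 = 4 * (α - 1) := by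
  intro x hx
  have key : ∑ i, ∑ j, (Matrix.vecMul x (A i) j) ^ 2 = α := by
    have h1 : ∀ i, ∑ j, (Matrix.vecMul x (A i) j) ^ 2
        = x ⬝ᵥ ((A i) ^ 2).mulVec x := by
      intro i
      have hv : Matrix.vecMul x (A i) = (A i).mulVec x := by
        conv_lhs => rw [← (hsymm i).eq]
        rw [vecMul_transpose]
      have : x ⬝ᵥ ((A i) ^ 2).mulVec x
          = (A i).mulVec x ⬝ᵥ (A i).mulVec x := by
        rw [pow_two, ← mulVec_mulVec, dotProduct_mulVec, hv]
      rw [this, ← hv]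
      simp [dotProduct, pow_two]
    calc ∑ i, ∑ j, (Matrix.vecMul x (A i) j) ^ 2
        = ∑ i, x ⬝ᵥ ((A i) ^ 2).mulVec x := by simp_rw [h1]
      _ = x ⬝ᵥ (∑ i, (A i) ^ 2).mulVec x := (dot_sum_mulVec _ _ _).symm
      _ = x ⬝ᵥ (α • (1 : Matrix (Fin (m + 1)) (Fin (m + 1)) ℝ)).mulVec x := by rw [hS]
      _ = α * ∑ k, x k ^ 2 := by
          simp [smul_mulVec, dotProduct, pow_two, Finset.mul_sum, mul_left_comm, mul_comm]
      _ = α := by rw [hx, mul_one]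
  have expand : ∑ i, ∑ j, (2 * Matrix.vecMul x (A i) j) ^ 2
      = 4 * ∑ i, ∑ j, (Matrix.vecMul x (A i) j) ^ 2 := by
    simp_rw [mul_pow, Finset.mul_sum]
    norm_num
  rw [expand, key]; ring
end

section
/- Let F: ℝ^{m+1} → ℝ^{n+1} be a quadratic form with symmetric matrices Aᵢ, mapping S^m into S^n, with S = A₁² + ... + A_{n+1}² = ((m+3)/2)·I_{m+1}. Then tr A₁ = tr A₂ = ... = tr A_{n+1} = 0. -/
open Matrix BigOperators Finset

lemma quad_single {m : ℕ} (M : Matrix (Fin (m+1)) (Fin (m+1)) ℝ) (j : Fin (m+1)) :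
    (Pi.single j 1 : Fin (m+1) → ℝ) ⬝ᵥ M.mulVec (Pi.single j 1) = M j j := by
  simp [dotProduct, mulVec, Pi.single_apply, Finset.mul_sum, mul_ite]

lemma quad_add {m : ℕ} (M : Matrix (Fin (m+1)) (Fin (m+1)) ℝ) (j k : Fin (m+1)) :
    (Pi.single j 1 + Pi.single k 1 : Fin (m+1) → ℝ) ⬝ᵥ
      M.mulVec (Pi.single j 1 + Pi.single k 1) = M j j + M j k + M k j + M k k := by
  simp [dotProduct, mulVec, mul_add, add_mul, Finset.mul_sum, Finset.sum_add_distrib,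
    Pi.single_apply]
  ring

lemma quad_sub {m : ℕ} (M : Matrix (Fin (m+1)) (Fin (m+1)) ℝ) (j k : Fin (m+1)) :
    (Pi.single j 1 - Pi.single k 1 : Fin (m+1) → ℝ) ⬝ᵥ
      M.mulVec (Pi.single j 1 - Pi.single k 1) = M j j - M j k - M k j + M k k := by
  simp [dotProduct, mulVec, mul_sub, sub_mul, mul_add, add_mul, Finset.mul_sum,
    Finset.sum_add_distrib, Finset.sum_sub_distrib, Pi.single_apply]
  ring

lemma normsq_single {m : ℕ} (j : Fin (m+1)) :
    ∑ p, ((Pi.single j 1 : Fin (m+1) → ℝ) p)^2 = 1 := by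
  simp [Pi.single_apply]

lemma normsq_add {m : ℕ} (j k : Fin (m+1)) (h : j ≠ k) :
    ∑ p, ((Pi.single j 1 + Pi.single k 1 : Fin (m+1) → ℝ) p)^2 = 2 := by
  simp [Pi.single_apply, add_sq, Finset.sum_add_distrib, Finset.mul_sum, mul_ite, h, h.symm]
  norm_num

lemma normsq_sub {m : ℕ} (j k : Fin (m+1)) (h : j ≠ k) :
    ∑ p, ((Pi.single j 1 - Pi.single k 1 : Fin (m+1) → ℝ) p)^2 = 2 := by
  simp [Pi.single_apply, sub_sq, Finset.sum_add_distrib, Finset.sum_sub_distrib,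
    Finset.mul_sum, mul_ite, h, h.symm]
  norm_num

/-- If a quadratic form mapping `S^m` into `S^n` has
`S = A₁² + ⋯ + A_{n+1}² = ((m+3)/2)·I_{m+1}`, then all traces `tr Aᵢ` vanish. -/
theorem stmt8 (m n : ℕ) (A : Fin (n + 1) → Matrix (Fin (m + 1)) (Fin (m + 1)) ℝ)
    (hsymm : ∀ i, (A i).IsSymm)
    (hsphere : ∀ x : Fin (m + 1) → ℝ,
      ∑ i, (x ⬝ᵥ (A i).mulVec x) ^ 2 = (∑ k, x k ^ 2) ^ 2)
    (hS : ∑ i, (A i) ^ 2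
      = (((m : ℝ) + 3) / 2) • (1 : Matrix (Fin (m + 1)) (Fin (m + 1)) ℝ)) :
    ∀ i, (A i).trace = 0 := by
  -- symmetry pointwise
  have hsym : ∀ i (j k : Fin (m+1)), A i k j = A i j k := fun i j k => (hsymm i).apply j k
  -- diagonal relation
  have hdiag : ∀ j, ∑ i, (A i j j)^2 = 1 := by
    intro j
    have h := hsphere (Pi.single j 1)
    simp only [quad_single, normsq_single, one_pow] at h
    exact h
  -- off-diagonal relation
  have hoff : ∀ j k, j ≠ k → ∑ i, (2*(A i j j)*(A i k k) + 4*(A i j k)^2) = 2 := by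
    intro j k h
    have h1 := hsphere (Pi.single j 1 + Pi.single k 1)
    have h2 := hsphere (Pi.single j 1 - Pi.single k 1)
    simp only [quad_add, normsq_add j k h] at h1
    simp only [quad_sub, normsq_sub j k h] at h2
    have hj := hdiag j
    have hk := hdiag k
    have e : ∀ i, 2*(A i j j)*(A i k k) + 4*(A i j k)^2
        = ((A i j j + A i j k + A i k j + A i k k)^2
          + (A i j j - A i j k - A i k j + A i k k)^2
          - 2*(A i j j)^2 - 2*(A i k k)^2)/2 := by
      intro i
      rw [hsym i j k]
      ring
    calc ∑ i, (2*(A i j j)*(A i k k) + 4*(A i j k)^2)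
        = ∑ i, ((A i j j + A i j k + A i k j + A i k k)^2
          + (A i j j - A i j k - A i k j + A i k k)^2
          - 2*(A i j j)^2 - 2*(A i k k)^2)/2 := Finset.sum_congr rfl (fun i _ => e i)
      _ = ((∑ i, (A i j j + A i j k + A i k j + A i k k)^2)
          + (∑ i, (A i j j - A i j k - A i k j + A i k k)^2)
          - 2*(∑ i, (A i j j)^2) - 2*(∑ i, (A i k k)^2))/2 := by
            rw [← Finset.sum_div]
            congr 1
            rw [Finset.sum_sub_distrib, Finset.sum_sub_distrib, Finset.sum_add_distrib,
              Finset.mul_sum, Finset.mul_sum]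
      _ = 2 := by rw [h1, h2, hj, hk]; norm_num
  -- uniform relation
  have hjk : ∀ j k, ∑ i, (2*(A i j j)*(A i k k) + 4*(A i j k)^2)
      = if j = k then (6:ℝ) else 2 := by
    intro j k
    by_cases h : j = k
    · subst h
      simp only [if_pos rfl]
      have : ∑ i, (2*(A i j j)*(A i j j) + 4*(A i j j)^2) = 6 * ∑ i, (A i j j)^2 := by
        rw [Finset.mul_sum]
        exact Finset.sum_congr rfl (fun i _ => by ring)
      rw [this, hdiag]; norm_num
    · simp [h, hoff j k h]
  -- grand sum, combinatorial side
  have hsum : ∑ j, ∑ k, ∑ i, (2*(A i j j)*(A i k k) + 4*(A i j k)^2)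
      = 2*((m:ℝ)+1)^2 + 4*((m:ℝ)+1) := by
    rw [Finset.sum_congr rfl (fun j _ => Finset.sum_congr rfl (fun k _ => hjk j k))]
    have inner : ∀ j : Fin (m+1), ∑ k, (if j = k then (6:ℝ) else 2) = 2*((m:ℝ)+1)+4 := by
      intro j
      have step : ∀ k : Fin (m+1), (if j = k then (6:ℝ) else 2)
          = 2 + (if j = k then (4:ℝ) else 0) := by intro k; split <;> norm_num
      simp [step, Finset.sum_add_distrib, Finset.sum_ite_eq, Finset.card_univ]
      ring
    rw [Finset.sum_congr rfl (fun j _ => inner j)]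
    simp [Finset.sum_const, Finset.card_univ]
    ring
  -- trace of S
  have htrS : ∑ i, ∑ j, ∑ k, (A i j k)^2 = ((m:ℝ)+3)/2 * ((m:ℝ)+1) := by
    have h := congrArg Matrix.trace hS
    rw [Matrix.trace_sum] at h
    have h2 : ∀ i, ((A i)^2).trace = ∑ j, ∑ k, (A i j k)^2 := by
      intro i
      rw [Matrix.trace, pow_two]
      simp only [Matrix.diag_apply, Matrix.mul_apply]
      exact Finset.sum_congr rfl (fun j _ => Finset.sum_congr rfl (fun k _ => by
        rw [hsym i j k]; ring))
    rw [Finset.sum_congr rfl (fun i _ => h2 i)] at h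
    rw [h]
    simp [Matrix.trace_smul, Matrix.trace_one]
  -- grand sum, algebraic side
  have halg : ∑ j, ∑ k, ∑ i, (2*(A i j j)*(A i k k) + 4*(A i j k)^2)
      = 2*(∑ i, ((A i).trace)^2) + 4*(((m:ℝ)+3)/2 * ((m:ℝ)+1)) := by
    rw [← htrS]
    have swap : ∑ j, ∑ k, ∑ i, (2*(A i j j)*(A i k k) + 4*(A i j k)^2)
        = ∑ i, ∑ j, ∑ k, (2*(A i j j)*(A i k k) + 4*(A i j k)^2) := by
      calc ∑ j, ∑ k, ∑ i, (2*(A i j j)*(A i k k) + 4*(A i j k)^2)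
          = ∑ j, ∑ i, ∑ k, (2*(A i j j)*(A i k k) + 4*(A i j k)^2) :=
            Finset.sum_congr rfl (fun j _ => Finset.sum_comm)
        _ = ∑ i, ∑ j, ∑ k, (2*(A i j j)*(A i k k) + 4*(A i j k)^2) := Finset.sum_comm
    rw [swap]
    have per_i : ∀ i, ∑ j, ∑ k, (2*(A i j j)*(A i k k) + 4*(A i j k)^2)
        = 2*((A i).trace)^2 + 4*(∑ j, ∑ k, (A i j k)^2) := by
      intro i
      have htr : (A i).trace = ∑ j, A i j j := by
        simp [Matrix.trace, Matrix.diag]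
      rw [htr]
      calc ∑ j, ∑ k, (2*(A i j j)*(A i k k) + 4*(A i j k)^2)
          = ∑ j, (∑ k, 2*(A i j j)*(A i k k) + ∑ k, 4*(A i j k)^2) :=
            Finset.sum_congr rfl (fun j _ => Finset.sum_add_distrib)
        _ = (∑ j, ∑ k, 2*(A i j j)*(A i k k)) + ∑ j, ∑ k, 4*(A i j k)^2 :=
            Finset.sum_add_distrib
        _ = 2*(∑ j, A i j j)^2 + 4*(∑ j, ∑ k, (A i j k)^2) := by
            congr 1
            · rw [sq, Finset.sum_mul_sum, Finset.mul_sum]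
              exact Finset.sum_congr rfl (fun j _ => by
                rw [Finset.mul_sum]
                exact Finset.sum_congr rfl (fun k _ => by ring))
            · rw [Finset.mul_sum]
              exact Finset.sum_congr rfl (fun j _ => by rw [Finset.mul_sum])
    rw [Finset.sum_congr rfl (fun i _ => per_i i)]
    rw [Finset.sum_add_distrib, ← Finset.mul_sum, ← Finset.mul_sum]
  -- conclude sum of squared traces is zero
  have key : ∑ i, ((A i).trace)^2 = 0 := by
    have eq1 : 2*(∑ i, ((A i).trace)^2) + 4*(((m:ℝ)+3)/2 * ((m:ℝ)+1))
        = 2*((m:ℝ)+1)^2 + 4*((m:ℝ)+1) := by rw [← halg, hsum]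
    linear_combination eq1 / 2
  intro i
  have h0 : ((A i).trace)^2 = 0 :=
    (Finset.sum_eq_zero_iff_of_nonneg (fun i _ => sq_nonneg _)).mp key i (Finset.mem_univ i)
  exact (pow_eq_zero_iff two_ne_zero).mp h0
end

section
/- Let φ: S^m → S^n be a quadratic form (restriction of F: ℝ^{m+1} → ℝ^{n+1} given by symmetric matrices Aᵢ with |F(x)|² = |x|⁴). Then φ has energy density e(φ) ≡ m+1 (equivalently S = ((m+3)/2)I_{m+1}) if and only if all traces tr Aᵢ vanish. -/
open Matrix BigOperators Finset

/-- For a symmetric matrix, the associated bilinear form is symmetric. -/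
lemma dsymm {m : ℕ} (M : Matrix (Fin m) (Fin m) ℝ) (h : M.IsSymm)
    (x y : Fin m → ℝ) : x ⬝ᵥ M.mulVec y = y ⬝ᵥ M.mulVec x := by
  rw [Matrix.dotProduct_mulVec, ← Matrix.mulVec_transpose, h.eq, dotProduct_comm]

/-- The quadratic form of `M ^ 2` is the squared norm of `M x`. -/
lemma sqform {m : ℕ} (M : Matrix (Fin m) (Fin m) ℝ) (h : M.IsSymm)
    (x : Fin m → ℝ) : x ⬝ᵥ (M ^ 2).mulVec x = ∑ k, (M.mulVec x k) ^ 2 := by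
  have hvm : Matrix.vecMul x M = M.mulVec x := by
    rw [← Matrix.mulVec_transpose, h.eq]
  rw [sq, ← Matrix.mulVec_mulVec, Matrix.dotProduct_mulVec, hvm]
  simp [dotProduct, sq]

lemma htrace {m : ℕ} (M : Matrix (Fin m) (Fin m) ℝ) : M.trace = ∑ k, M k k := by
  simp [Matrix.trace, Matrix.diag]

/-- Extracting the `t^2` coefficient from a quartic polynomial identity. -/
lemma coeff2 (C0 C1 C2 C3 C4 : ℝ)
    (h : ∀ t : ℝ, C0 + C1*t + C2*t^2 + C3*t^3 + C4*t^4 = 0) : C2 = 0 := by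
  have h0 := h 0
  have h1 := h 1
  have h2 := h (-1)
  have h3 := h 2
  have h4 := h (-2)
  norm_num at h0 h1 h2 h3 h4
  linarith

/-- Polarization of the sphere identity. -/
lemma polar (m n : ℕ) (A : Fin (n + 1) → Matrix (Fin (m + 1)) (Fin (m + 1)) ℝ)
    (hsymm : ∀ i, (A i).IsSymm)
    (hsphere : ∀ x : Fin (m + 1) → ℝ,
      ∑ i, (x ⬝ᵥ (A i).mulVec x) ^ 2 = (∑ k, x k ^ 2) ^ 2)
    (x y : Fin (m + 1) → ℝ) :
    ∑ i, ((x ⬝ᵥ (A i).mulVec x) * (y ⬝ᵥ (A i).mulVec y) + 2 * (x ⬝ᵥ (A i).mulVec y) ^ 2)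
      = (∑ k, x k ^ 2) * (∑ k, y k ^ 2) + 2 * (∑ k, x k * y k) ^ 2 := by
  set a : Fin (n+1) → ℝ := fun i => x ⬝ᵥ (A i).mulVec x with ha
  set b : Fin (n+1) → ℝ := fun i => x ⬝ᵥ (A i).mulVec y with hb
  set c : Fin (n+1) → ℝ := fun i => y ⬝ᵥ (A i).mulVec y with hc
  set sa : ℝ := ∑ k, x k ^ 2 with hsa
  set sb : ℝ := ∑ k, x k * y k with hsb
  set sc : ℝ := ∑ k, y k ^ 2 with hsc
  -- key polynomial identity in t
  have key : ∀ t : ℝ,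
      ((∑ i, (a i)^2) - sa^2)
      + (4*(∑ i, a i * b i) - 4*sa*sb) * t
      + ((2*(∑ i, a i * c i) + 4*(∑ i, (b i)^2)) - (2*sa*sc + 4*sb^2)) * t^2
      + (4*(∑ i, b i * c i) - 4*sb*sc) * t^3
      + ((∑ i, (c i)^2) - sc^2) * t^4 = 0 := by
    intro t
    have h := hsphere (x + t • y)
    have e1 : ∀ i, (x + t • y) ⬝ᵥ (A i).mulVec (x + t • y)
        = a i + 2*t*(b i) + t^2 * (c i) := by
      intro i
      have hyx : y ⬝ᵥ (A i).mulVec x = x ⬝ᵥ (A i).mulVec y := dsymm (A i) (hsymm i) y x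
      simp only [Matrix.mulVec_add, Matrix.mulVec_smul, dotProduct_add,
        add_dotProduct, dotProduct_smul, smul_dotProduct,
        smul_eq_mul, hyx, ha, hb, hc]
      ring
    have e2 : ∑ k, ((x + t • y) k) ^ 2 = sa + 2*t*sb + t^2*sc := by
      have : ∀ k, ((x + t • y) k) ^ 2
          = x k ^ 2 + (2*t)*(x k * y k) + t^2 * (y k ^ 2) := by
        intro k
        simp only [Pi.add_apply, Pi.smul_apply, smul_eq_mul]
        ring
      rw [Finset.sum_congr rfl fun k _ => this k]
      rw [Finset.sum_add_distrib, Finset.sum_add_distrib, ← Finset.mul_sum, ← Finset.mul_sum]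
    rw [Finset.sum_congr rfl fun i _ => by rw [e1 i], e2] at h
    have e3 : ∑ i, (a i + 2*t*(b i) + t^2*(c i))^2
        = (∑ i, (a i)^2) + (4*t)*(∑ i, a i * b i)
          + (2*t^2)*(∑ i, a i * c i) + (4*t^2)*(∑ i, (b i)^2)
          + (4*t^3)*(∑ i, b i * c i) + t^4*(∑ i, (c i)^2) := by
      rw [Finset.sum_congr rfl fun i _ => show (a i + 2*t*(b i) + t^2*(c i))^2
          = (a i)^2 + (4*t)*(a i * b i) + (2*t^2)*(a i * c i) + (4*t^2)*((b i)^2)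
            + (4*t^3)*(b i * c i) + t^4*((c i)^2) from by ring]
      simp only [Finset.sum_add_distrib, ← Finset.mul_sum]
    rw [e3] at h
    linear_combination h
  have h2 := coeff2 _ _ _ _ _ key
  have hsplit : ∑ i, (a i * c i + 2 * (b i)^2)
      = (∑ i, a i * c i) + 2 * ∑ i, (b i)^2 := by
    rw [Finset.sum_add_distrib, ← Finset.mul_sum]
  rw [hsplit]
  linarith

/-- Master identity: `∑ᵢ (xᵀAᵢx)·tr(Aᵢ) + 2 xᵀSx = (m+3)|x|²`. -/
lemma master (m n : ℕ) (A : Fin (n + 1) → Matrix (Fin (m + 1)) (Fin (m + 1)) ℝ)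
    (hsymm : ∀ i, (A i).IsSymm)
    (hsphere : ∀ x : Fin (m + 1) → ℝ,
      ∑ i, (x ⬝ᵥ (A i).mulVec x) ^ 2 = (∑ k, x k ^ 2) ^ 2)
    (x : Fin (m + 1) → ℝ) :
    (∑ i, (x ⬝ᵥ (A i).mulVec x) * (A i).trace)
      + 2 * (x ⬝ᵥ (∑ i, (A i) ^ 2).mulVec x)
      = ((m : ℝ) + 3) * ∑ k, x k ^ 2 := by
  -- evaluate polarization at standard basis vectors and sum over k
  have hp : ∀ k : Fin (m + 1),
      ∑ i, ((x ⬝ᵥ (A i).mulVec x) * (A i k k) + 2 * ((A i).mulVec x k) ^ 2)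
        = (∑ j, x j ^ 2) * 1 + 2 * (x k) ^ 2 := by
    intro k
    have h := polar m n A hsymm hsphere x (Pi.single k 1)
    have e1 : ∀ i, (Pi.single k 1 : Fin (m+1) → ℝ) ⬝ᵥ (A i).mulVec (Pi.single k 1)
        = A i k k := by
      intro i
      rw [Matrix.mulVec_single]
      simp [dotProduct, Pi.single_apply]
    have e2 : ∀ i, x ⬝ᵥ (A i).mulVec (Pi.single k 1) = (A i).mulVec x k := by
      intro i
      rw [dsymm (A i) (hsymm i)]
      simp [dotProduct, Pi.single_apply]
    have e3 : ∑ j, (Pi.single k 1 : Fin (m+1) → ℝ) j ^ 2 = 1 := by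
      simp [Pi.single_apply, sq]
    have e4 : ∑ j, x j * (Pi.single k 1 : Fin (m+1) → ℝ) j = x k := by
      simp [Pi.single_apply]
    rw [e3, e4] at h
    rw [Finset.sum_congr rfl fun i _ => by rw [e1 i, e2 i]] at h
    linarith [h]
  have hsum := Finset.sum_congr rfl fun k (_ : k ∈ Finset.univ) => hp k
  rw [Finset.sum_comm] at hsum
  -- simplify both sides
  have hL : ∀ i : Fin (n+1), ∑ k, ((x ⬝ᵥ (A i).mulVec x) * (A i k k)
      + 2 * ((A i).mulVec x k) ^ 2)
      = (x ⬝ᵥ (A i).mulVec x) * (A i).trace + 2 * (x ⬝ᵥ ((A i)^2).mulVec x) := by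
    intro i
    rw [Finset.sum_add_distrib, ← Finset.mul_sum, ← Finset.mul_sum,
      ← sqform (A i) (hsymm i) x, ← htrace (A i)]
  rw [Finset.sum_congr rfl fun i _ => hL i, Finset.sum_add_distrib,
    ← Finset.mul_sum] at hsum
  have hR : ∑ k : Fin (m+1), ((∑ j, x j ^ 2) * 1 + 2 * (x k) ^ 2)
      = ((m : ℝ) + 1) * (∑ j, x j ^ 2) + 2 * (∑ j, x j ^ 2) := by
    rw [Finset.sum_add_distrib, Finset.sum_const, Finset.card_univ, ← Finset.mul_sum]
    simp only [Fintype.card_fin, nsmul_eq_mul, mul_one]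
    push_cast
    ring
  rw [hR] at hsum
  have hS : x ⬝ᵥ (∑ i, (A i) ^ 2).mulVec x = ∑ i, x ⬝ᵥ ((A i)^2).mulVec x := by
    have : (∑ i, (A i) ^ 2).mulVec x = ∑ i, ((A i)^2).mulVec x := by
      funext j
      simp only [Matrix.mulVec, dotProduct, Finset.sum_apply, Matrix.sum_apply,
        Finset.sum_mul]
      rw [Finset.sum_comm]
    rw [this]
    simp only [dotProduct, Finset.sum_apply, Finset.mul_sum]
    rw [Finset.sum_comm]
  rw [hS]
  linarith [hsum]

/-- A quadratic form `φ : S^m → S^n` has energy density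
`e(φ)(x) = 2XᵀSX - 2` identically equal to `m+1` if and only if all traces `tr Aᵢ`
vanish (i.e. `φ` is harmonic). -/
theorem stmt9 (m n : ℕ) (A : Fin (n + 1) → Matrix (Fin (m + 1)) (Fin (m + 1)) ℝ)
    (hsymm : ∀ i, (A i).IsSymm)
    (hsphere : ∀ x : Fin (m + 1) → ℝ,
      ∑ i, (x ⬝ᵥ (A i).mulVec x) ^ 2 = (∑ k, x k ^ 2) ^ 2) :
    (∀ x : Fin (m + 1) → ℝ, ∑ k, x k ^ 2 = 1 →
      2 * (x ⬝ᵥ (∑ i, (A i) ^ 2).mulVec x) - 2 = (m : ℝ) + 1)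
    ↔ ∀ i, (A i).trace = 0 := by
  constructor
  · intro h
    -- at each basis vector, the trace combination vanishes
    have hek : ∀ k : Fin (m+1), ∑ i, (A i k k) * (A i).trace = 0 := by
      intro k
      have e3 : ∑ j, (Pi.single k 1 : Fin (m+1) → ℝ) j ^ 2 = 1 := by
        simp [Pi.single_apply, sq]
      have hm := master m n A hsymm hsphere (Pi.single k 1)
      have he := h (Pi.single k 1) e3
      rw [e3] at hm
      have e1 : ∀ i, (Pi.single k 1 : Fin (m+1) → ℝ) ⬝ᵥ (A i).mulVec (Pi.single k 1)
          = A i k k := by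
        intro i
        rw [Matrix.mulVec_single]
        simp [dotProduct, Pi.single_apply]
      rw [Finset.sum_congr rfl fun i _ => by rw [e1 i]] at hm
      linarith
    have hsum : ∑ i, ((A i).trace) ^ 2 = 0 := by
      have h1 : ∑ k : Fin (m+1), ∑ i, (A i k k) * (A i).trace = 0 := by
        rw [Finset.sum_congr rfl fun k (_ : k ∈ Finset.univ) => hek k]
        simp
      rw [Finset.sum_comm] at h1
      calc ∑ i, ((A i).trace) ^ 2
          = ∑ i, ∑ k, (A i k k) * (A i).trace := by
            apply Finset.sum_congr rfl
            intro i _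
            rw [htrace (A i), sq, Finset.sum_mul]
        _ = 0 := h1
    intro i
    have := (Finset.sum_eq_zero_iff_of_nonneg
      (fun i _ => sq_nonneg ((A i).trace))).mp hsum i (Finset.mem_univ i)
    exact pow_eq_zero_iff (n := 2) (by norm_num) |>.mp this
  · intro h x hx
    have hm := master m n A hsymm hsphere x
    rw [hx] at hm
    rw [Finset.sum_congr rfl fun i _ => by rw [h i, mul_zero]] at hm
    simp at hm
    linarith
end
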